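/- arXiv:2108.11085 — 2 statements merged into one kernel-verified Lean document; each statement's English description precedes it below -/
import Mathlib

section
/- Let a, b ∈ ℂⁿ be linearly independent vectors and set X = aaᵀ + bbᵀ. Then there exists λ ∈ ℂ with X² = λX if and only if aᵀa = bᵀb and aᵀb = 0. -/
/-!
Since `(a aᵀ + b bᵀ) M = a (aᵀM) + b (bᵀM)` and `a, b` are independent, `X² = λX` holds iff
`aᵀX = λaᵀ` and `bᵀX = λbᵀ`. As `aᵀX = q(a) aᵀ + q(a,b) bᵀ` and `bᵀX = q(a,b) aᵀ + q(b) bᵀ`,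
comparing coefficients in the basis `a, b` gives `q(a) = λ = q(b)` and `q(a,b) = 0`.
-/

open Matrix

section

variable {R l m n : Type*}

theorem LinearIndependent.vecMulVec_add_vecMulVec_inj [CommSemiring R] {a b : m → R}
    (hab : LinearIndependent R ![a, b]) {p r p' r' : n → R} :
    vecMulVec a p + vecMulVec b r = vecMulVec a p' + vecMulVec b r' ↔ p = p' ∧ r = r' := by
  refine ⟨fun h => ?_, fun ⟨hp, hr⟩ => hp ▸ hr ▸ rfl⟩
  have hcol : ∀ j, p j = p' j ∧ r j = r' j := fun j =>
    hab.eq_of_pair <| funext fun i => by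
      simpa [vecMulVec_apply, mul_comm] using congrFun (congrFun h i) j
  exact ⟨funext fun j => (hcol j).1, funext fun j => (hcol j).2⟩

theorem LinearIndependent.vecMulVec_add_vecMulVec_mul_eq_smul_iff [CommSemiring R] [Fintype m]
    {a b : l → R} (hab : LinearIndependent R ![a, b]) (c d : m → R) (M : Matrix m m R)
    (lam : R) :
    (vecMulVec a c + vecMulVec b d) * M = lam • (vecMulVec a c + vecMulVec b d) ↔
      c ᵥ* M = lam • c ∧ d ᵥ* M = lam • d := by
  rw [Matrix.add_mul, vecMulVec_mul, vecMulVec_mul, smul_add, ← vecMulVec_smul, ← vecMulVec_smul,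
    hab.vecMulVec_add_vecMulVec_inj]

end

/-- For linearly independent `a, b ∈ ℂⁿ` and `X = aaᵀ + bbᵀ`, the matrix `X²`
is proportional to `X` iff `aᵀa = bᵀb` and `aᵀb = 0`. -/
theorem square_proportional_iff (n : ℕ) (a b : Fin n → ℂ)
    (hab : LinearIndependent ℂ ![a, b]) :
    (∃ lam : ℂ, (vecMulVec a a + vecMulVec b b) * (vecMulVec a a + vecMulVec b b) =
        lam • (vecMulVec a a + vecMulVec b b)) ↔
      a ⬝ᵥ a = b ⬝ᵥ b ∧ a ⬝ᵥ b = 0 := by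
  have haX : a ᵥ* (vecMulVec a a + vecMulVec b b) = (a ⬝ᵥ a) • a + (a ⬝ᵥ b) • b := by
    rw [vecMul_add, vecMul_vecMulVec, vecMul_vecMulVec]
  have hbX : b ᵥ* (vecMulVec a a + vecMulVec b b) = (a ⬝ᵥ b) • a + (b ⬝ᵥ b) • b := by
    rw [vecMul_add, vecMul_vecMulVec, vecMul_vecMulVec, dotProduct_comm]
  simp_rw [hab.vecMulVec_add_vecMulVec_mul_eq_smul_iff, haX, hbX]
  constructor
  · rintro ⟨lam, ha, hb⟩
    obtain ⟨haa, horth⟩ := hab.eq_of_pair (s' := lam) (t' := 0) (by simpa using ha)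
    obtain ⟨-, hbb⟩ := hab.eq_of_pair (s' := 0) (t' := lam) (by simpa using hb)
    exact ⟨haa.trans hbb.symm, horth⟩
  · rintro ⟨hnorm, horth⟩
    exact ⟨a ⬝ᵥ a, by simp [horth], by simp [horth, hnorm]⟩
end

section
/- Let U ⊆ ℂⁿ be a 2-dimensional linear subspace on which the standard symmetric bilinear form q(u,v) = uᵀv is nondegenerate. Then there exists an n×n complex symmetric matrix X of rank 2 whose column space equals U and such that X² = λX for some λ ≠ 0; moreover, any two symmetric matrices of rank 2 with column space U whose square is a scalar multiple of themselves are proportional (X is unique up to scalar, and is the dual quadratic form of q restricted to U). -/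
open Matrix

open Module

private lemma mat_ext {n : ℕ} {A B : Matrix (Fin n) (Fin n) ℂ}
    (h : ∀ v, A *ᵥ v = B *ᵥ v) : A = B := by
  ext i j
  have := congrFun (h (Pi.single j 1)) i
  simpa [mulVec_single] using this

private lemma symm_dot {n : ℕ} {A : Matrix (Fin n) (Fin n) ℂ} (hA : Aᵀ = A)
    (x y : Fin n → ℂ) : (A *ᵥ x) ⬝ᵥ y = x ⬝ᵥ (A *ᵥ y) := by
  rw [dotProduct_mulVec, ← mulVec_transpose, hA]

private lemma fix_lem {n : ℕ} {U : Submodule ℂ (Fin n → ℂ)}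
    {A : Matrix (Fin n) (Fin n) ℂ} (hA : A * A = A)
    (hAr : LinearMap.range A.mulVecLin = U) : ∀ u ∈ U, A *ᵥ u = u := by
  intro u hu
  rw [← hAr] at hu
  obtain ⟨z, rfl⟩ := hu
  show A *ᵥ (A *ᵥ z) = A *ᵥ z
  rw [mulVec_mulVec, hA]

private lemma mem_lem {n : ℕ} {U : Submodule ℂ (Fin n → ℂ)}
    {A : Matrix (Fin n) (Fin n) ℂ}
    (hAr : LinearMap.range A.mulVecLin = U) (x : Fin n → ℂ) : A *ᵥ x ∈ U := by
  rw [← hAr]; exact ⟨x, rfl⟩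

private lemma kill_lem {n : ℕ} {U : Submodule ℂ (Fin n → ℂ)}
    (hq : ∀ u ∈ U, (∀ v ∈ U, u ⬝ᵥ v = 0) → u = 0)
    {A : Matrix (Fin n) (Fin n) ℂ} (hAs : Aᵀ = A) (hA : A * A = A)
    (hAr : LinearMap.range A.mulVecLin = U) {x : Fin n → ℂ}
    (hx : ∀ u ∈ U, x ⬝ᵥ u = 0) : A *ᵥ x = 0 := by
  apply hq _ (mem_lem hAr x)
  intro v hv
  rw [symm_dot hAs, fix_lem hA hAr v hv]
  exact hx v hv

private lemma proj_unique {n : ℕ} {U : Submodule ℂ (Fin n → ℂ)}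
    (hq : ∀ u ∈ U, (∀ v ∈ U, u ⬝ᵥ v = 0) → u = 0)
    {P Q : Matrix (Fin n) (Fin n) ℂ}
    (hPs : Pᵀ = P) (hPi : P * P = P) (hPr : LinearMap.range P.mulVecLin = U)
    (hQs : Qᵀ = Q) (hQi : Q * Q = Q) (hQr : LinearMap.range Q.mulVecLin = U) :
    P = Q := by
  apply mat_ext
  intro v
  have hdec : v = P *ᵥ v + (v - P *ᵥ v) := by ring_nf
  have h1 : Q *ᵥ (P *ᵥ v) = P *ᵥ v := fix_lem hQi hQr _ (mem_lem hPr v)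
  have h2 : Q *ᵥ (v - P *ᵥ v) = 0 := by
    apply kill_lem hq hQs hQi hQr
    intro u hu
    rw [sub_dotProduct, symm_dot hPs, fix_lem hPi hPr u hu, sub_self]
  calc P *ᵥ v = Q *ᵥ (P *ᵥ v) + Q *ᵥ (v - P *ᵥ v) := by rw [h1, h2]; ring_nf
  _ = Q *ᵥ (P *ᵥ v + (v - P *ᵥ v)) := by rw [mulVec_add]
  _ = Q *ᵥ v := by rw [← hdec]

private lemma lam_ne_zero {n : ℕ} {U : Submodule ℂ (Fin n → ℂ)}
    (hU : Module.finrank ℂ U = 2)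
    (hq : ∀ u ∈ U, (∀ v ∈ U, u ⬝ᵥ v = 0) → u = 0)
    {X : Matrix (Fin n) (Fin n) ℂ} (hXs : Xᵀ = X)
    (hXr : LinearMap.range X.mulVecLin = U)
    {lam : ℂ} (h : X * X = lam • X) : lam ≠ 0 := by
  rintro rfl
  rw [zero_smul] at h
  have hbot : U = ⊥ := by
    rw [Submodule.eq_bot_iff]
    intro u hu
    apply hq u hu
    intro v hv
    rw [← hXr] at hu hv
    obtain ⟨a, rfl⟩ := hu
    obtain ⟨b, rfl⟩ := hv
    show (X *ᵥ a) ⬝ᵥ (X *ᵥ b) = 0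
    rw [symm_dot hXs, mulVec_mulVec, h]
    simp
  rw [hbot, finrank_bot] at hU
  exact two_ne_zero hU.symm
private lemma vecMulVec_mulVec' {n : ℕ} (a b y : Fin n → ℂ) :
    (vecMulVec a b) *ᵥ y = (b ⬝ᵥ y) • a := by
  funext i
  simp only [mulVec, dotProduct, vecMulVec_apply, Pi.smul_apply, smul_eq_mul, Finset.sum_mul]
  exact Finset.sum_congr rfl fun j _ => by ring

private lemma exists_X {n : ℕ} {U : Submodule ℂ (Fin n → ℂ)}
    (hU : Module.finrank ℂ U = 2)
    (hq : ∀ u ∈ U, (∀ v ∈ U, u ⬝ᵥ v = 0) → u = 0) :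
    ∃ X : Matrix (Fin n) (Fin n) ℂ, Xᵀ = X ∧ X.rank = 2 ∧
        LinearMap.range X.mulVecLin = U ∧
        ∃ lam : ℂ, lam ≠ 0 ∧ X * X = lam • X := by
  classical
  have hex : ∃ u ∈ U, u ⬝ᵥ u ≠ 0 := by
    by_contra hcon
    push_neg at hcon
    have horth : ∀ u ∈ U, ∀ v ∈ U, u ⬝ᵥ v = 0 := by
      intro u hu v hv
      have h1 := hcon (u + v) (U.add_mem hu hv)
      have h2 := hcon u hu
      have h3 := hcon v hv
      have hc : v ⬝ᵥ u = u ⬝ᵥ v := dotProduct_comm v u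
      rw [add_dotProduct, dotProduct_add, dotProduct_add, h2, h3, hc] at h1
      have h4 : (2 : ℂ) * (u ⬝ᵥ v) = 0 := by linear_combination h1
      have := mul_eq_zero.mp h4
      simpa using this
    have hbot : U = ⊥ := by
      rw [Submodule.eq_bot_iff]
      intro u hu
      exact hq u hu (horth u hu)
    rw [hbot, finrank_bot] at hU
    exact two_ne_zero hU.symm
  obtain ⟨u, huU, huu⟩ := hex
  obtain ⟨u₁, hu₁U, h11⟩ : ∃ u₁ ∈ U, u₁ ⬝ᵥ u₁ = 1 := by
    obtain ⟨c, hc⟩ := IsAlgClosed.exists_eq_mul_self (u ⬝ᵥ u)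
    have hc0 : c ≠ 0 := by rintro rfl; rw [mul_zero] at hc; exact huu hc
    refine ⟨c⁻¹ • u, U.smul_mem _ huU, ?_⟩
    rw [smul_dotProduct, dotProduct_smul, smul_eq_mul, smul_eq_mul, hc]
    field_simp
  have hu₁0 : u₁ ≠ 0 := by
    intro h; rw [h] at h11; simp at h11
  have hnle : ¬ U ≤ Submodule.span ℂ {u₁} := by
    intro hle
    have hmono := Submodule.finrank_mono hle
    rw [hU, finrank_span_singleton hu₁0] at hmono
    omega
  obtain ⟨v, hvU, hvs⟩ := SetLike.not_le_iff_exists.mp hnle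
  obtain ⟨w, hwU, hw1, hw0⟩ : ∃ w ∈ U, w ⬝ᵥ u₁ = 0 ∧ w ≠ 0 := by
    refine ⟨v - (v ⬝ᵥ u₁) • u₁, U.sub_mem hvU (U.smul_mem _ hu₁U), ?_, ?_⟩
    · rw [sub_dotProduct, smul_dotProduct, smul_eq_mul, h11, mul_one, sub_self]
    · intro h
      apply hvs
      have hv' : v = (v ⬝ᵥ u₁) • u₁ := sub_eq_zero.mp h
      rw [hv']
      exact Submodule.smul_mem _ _ (Submodule.mem_span_singleton_self u₁)
  have h1w : u₁ ⬝ᵥ w = 0 := by rw [dotProduct_comm]; exact hw1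
  have hli : LinearIndependent ℂ ![u₁, w] := by
    rw [LinearIndependent.pair_iff]
    intro s t hst
    have hdot := congrArg (fun z => z ⬝ᵥ u₁) hst
    simp only [add_dotProduct, smul_dotProduct, smul_eq_mul, h11, hw1, zero_dotProduct,
      mul_one, mul_zero, add_zero] at hdot
    refine ⟨hdot, ?_⟩
    rw [hdot, zero_smul, zero_add] at hst
    exact (smul_eq_zero.mp hst).resolve_right hw0
  have hspan : Submodule.span ℂ {u₁, w} = U := by
    apply Submodule.eq_of_le_of_finrank_eq
    · rw [Submodule.span_le]
      simp [Set.insert_subset_iff, hu₁U, hwU]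
    · rw [hU]
      have hcard := finrank_span_eq_card hli
      have hrg : Set.range ![u₁, w] = {u₁, w} := by
        ext x
        simp [Fin.exists_fin_two]
        tauto
      rw [hrg] at hcard
      simpa using hcard
  have hww : w ⬝ᵥ w ≠ 0 := by
    intro h0
    apply hw0
    apply hq w hwU
    intro x hx
    rw [← hspan] at hx
    obtain ⟨a, b, rfl⟩ := Submodule.mem_span_pair.mp hx
    rw [dotProduct_add, dotProduct_smul, dotProduct_smul, hw1, h0, smul_zero, smul_zero, add_zero]
  obtain ⟨u₂, hu₂U, h22, h21, d, hwu⟩ :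
      ∃ u₂ ∈ U, u₂ ⬝ᵥ u₂ = 1 ∧ u₂ ⬝ᵥ u₁ = 0 ∧ ∃ d : ℂ, w = d • u₂ := by
    obtain ⟨d, hd⟩ := IsAlgClosed.exists_eq_mul_self (w ⬝ᵥ w)
    have hd0 : d ≠ 0 := by rintro rfl; rw [mul_zero] at hd; exact hww hd
    refine ⟨d⁻¹ • w, U.smul_mem _ hwU, ?_, ?_, d, ?_⟩
    · rw [smul_dotProduct, dotProduct_smul, smul_eq_mul, smul_eq_mul, hd]
      field_simp
    · rw [smul_dotProduct, smul_eq_mul, hw1, mul_zero]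
    · rw [smul_smul, mul_inv_cancel₀ hd0, one_smul]
  have h12 : u₁ ⬝ᵥ u₂ = 0 := by rw [dotProduct_comm]; exact h21
  have hspan2 : Submodule.span ℂ {u₁, u₂} = U := by
    rw [← hspan]
    have hd0 : d ≠ 0 := by
      rintro rfl; rw [zero_smul] at hwu; exact hw0 hwu
    have hu₂w : u₂ = d⁻¹ • w := by
      rw [hwu, smul_smul, inv_mul_cancel₀ hd0, one_smul]
    have hm1 : u₁ ∈ Submodule.span ℂ ({u₁, w} : Set (Fin n → ℂ)) :=
      Submodule.subset_span (by simp)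
    have hm2 : u₂ ∈ Submodule.span ℂ ({u₁, w} : Set (Fin n → ℂ)) := by
      rw [hu₂w]
      exact Submodule.smul_mem _ _ (Submodule.subset_span (by simp))
    have hm1' : u₁ ∈ Submodule.span ℂ ({u₁, u₂} : Set (Fin n → ℂ)) :=
      Submodule.subset_span (by simp)
    have hm2' : w ∈ Submodule.span ℂ ({u₁, u₂} : Set (Fin n → ℂ)) := by
      rw [hwu]
      exact Submodule.smul_mem _ _ (Submodule.subset_span (by simp))
    apply le_antisymm
    · rw [Submodule.span_le]
      simp [Set.insert_subset_iff, hm1, hm2]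
    · rw [Submodule.span_le]
      simp [Set.insert_subset_iff, hm1', hm2']
  set X : Matrix (Fin n) (Fin n) ℂ := vecMulVec u₁ u₁ + vecMulVec u₂ u₂ with hXdef
  have hXv : ∀ y, X *ᵥ y = (u₁ ⬝ᵥ y) • u₁ + (u₂ ⬝ᵥ y) • u₂ := by
    intro y
    rw [hXdef, add_mulVec, vecMulVec_mulVec', vecMulVec_mulVec']
  have hXs : Xᵀ = X := by
    ext i j
    simp only [hXdef, transpose_apply, Matrix.add_apply, vecMulVec_apply]
    ring
  have hfix1 : X *ᵥ u₁ = u₁ := by rw [hXv, h11, h21]; simp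
  have hfix2 : X *ᵥ u₂ = u₂ := by rw [hXv, h12, h22]; simp
  have hXr : LinearMap.range X.mulVecLin = U := by
    apply le_antisymm
    · rintro x ⟨y, rfl⟩
      rw [mulVecLin_apply, hXv]
      exact U.add_mem (U.smul_mem _ hu₁U) (U.smul_mem _ hu₂U)
    · rw [← hspan2]
      have hm1 : u₁ ∈ LinearMap.range X.mulVecLin := ⟨u₁, by rw [mulVecLin_apply, hfix1]⟩
      have hm2 : u₂ ∈ LinearMap.range X.mulVecLin := ⟨u₂, by rw [mulVecLin_apply, hfix2]⟩
      rw [Submodule.span_le]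
      simp [Set.insert_subset_iff, hm1, hm2]
  have hXrank : X.rank = 2 := by
    have hdefrank : X.rank = Module.finrank ℂ (LinearMap.range X.mulVecLin) := rfl
    rw [hdefrank, hXr, hU]
  have hXX : X * X = (1 : ℂ) • X := by
    rw [one_smul]
    apply mat_ext
    intro y
    rw [← mulVec_mulVec, hXv y, mulVec_add, mulVec_smul, mulVec_smul, hfix1, hfix2]
  exact ⟨X, hXs, hXrank, hXr, 1, one_ne_zero, hXX⟩
private lemma range_smul_eq' {n : ℕ} {X : Matrix (Fin n) (Fin n) ℂ} {c : ℂ} (hc : c ≠ 0) :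
    LinearMap.range (c • X).mulVecLin = LinearMap.range X.mulVecLin := by
  apply le_antisymm
  · rintro x ⟨y, rfl⟩
    refine ⟨c • y, ?_⟩
    simp only [mulVecLin_apply, smul_mulVec, mulVec_smul]
  · rintro x ⟨y, rfl⟩
    refine ⟨c⁻¹ • y, ?_⟩
    simp only [mulVecLin_apply, smul_mulVec, mulVec_smul, smul_smul,
      mul_inv_cancel₀ hc, inv_mul_cancel₀ hc, one_smul]

private lemma proj_of_sq {n : ℕ} {X : Matrix (Fin n) (Fin n) ℂ} {lam : ℂ} (hlam : lam ≠ 0)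
    (hX : X * X = lam • X) : (lam⁻¹ • X) * (lam⁻¹ • X) = lam⁻¹ • X := by
  rw [smul_mul_assoc, mul_smul_comm, hX, smul_smul, smul_smul]
  congr 1
  field_simp

/-- If the standard bilinear form `q(u,v) = uᵀv` is nondegenerate on a
2-dimensional subspace `U ⊆ ℂⁿ`, then there is a symmetric rank-2 matrix `X`
with column space `U` and `X² = λX` for some `λ ≠ 0`; moreover any two
symmetric rank-2 matrices with column space `U` whose squares are scalar
multiples of themselves are proportional. -/
theorem dual_quadric_on_plane (n : ℕ) (U : Submodule ℂ (Fin n → ℂ))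
    (hU : Module.finrank ℂ U = 2)
    (hq : ∀ u ∈ U, (∀ v ∈ U, u ⬝ᵥ v = 0) → u = 0) :
    (∃ X : Matrix (Fin n) (Fin n) ℂ, Xᵀ = X ∧ X.rank = 2 ∧
        LinearMap.range X.mulVecLin = U ∧
        ∃ lam : ℂ, lam ≠ 0 ∧ X * X = lam • X) ∧
      ∀ X Y : Matrix (Fin n) (Fin n) ℂ,
        Xᵀ = X → X.rank = 2 → LinearMap.range X.mulVecLin = U →
        (∃ lam : ℂ, X * X = lam • X) →
        Yᵀ = Y → Y.rank = 2 → LinearMap.range Y.mulVecLin = U →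
        (∃ mu : ℂ, Y * Y = mu • Y) →
        ∃ c : ℂ, Y = c • X := by
  constructor
  · exact exists_X hU hq
  · rintro X Y hXs hXrk hXr ⟨lam, hX⟩ hYs hYrk hYr ⟨mu, hY⟩
    have hlam : lam ≠ 0 := lam_ne_zero hU hq hXs hXr hX
    have hmu : mu ≠ 0 := lam_ne_zero hU hq hYs hYr hY
    have hPQ : lam⁻¹ • X = mu⁻¹ • Y := by
      apply proj_unique hq
      · rw [transpose_smul, hXs]
      · exact proj_of_sq hlam hX
      · rw [range_smul_eq' (inv_ne_zero hlam), hXr]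
      · rw [transpose_smul, hYs]
      · exact proj_of_sq hmu hY
      · rw [range_smul_eq' (inv_ne_zero hmu), hYr]
    refine ⟨mu * lam⁻¹, ?_⟩
    have : mu • mu⁻¹ • Y = mu • lam⁻¹ • X := by rw [hPQ]
    rw [smul_smul, mul_inv_cancel₀ hmu, one_smul, smul_smul] at this
    exact this
end
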